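/- arXiv:1804.10984 — 2 statements merged into one kernel-verified Lean document; each statement's English description precedes it below -/
import Mathlib

section
/- For every integer N ≥ 0, define B̃_N^{sup} = sup_{‖f‖=1} ( Σ_{j=1}^N |⟨f, p'_N(w_j)⟩|² + Σ_{j>N} |⟨f, v_j⟩|² ) (so B̃_0^{sup} = 1). Then the sequence (B̃_N^{sup})_{N≥0} is nondecreasing: B̃_N^{sup} ≤ B̃_{N+1}^{sup} for every N ≥ 0. -/
open scoped BigOperators ComplexConjugate
open Submodule Filter

noncomputable section

local notation "⟪" x ", " y "⟫" => @inner ℂ _ _ x y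

variable {H : Type*} [NormedAddCommGroup H] [InnerProductSpace ℂ H] [CompleteSpace H]

/-- `u` is a frame of `H` with frame bounds `A ≤ B`. -/
def IsFrame (u : ℕ → H) (A B : ℝ) : Prop :=
  0 < A ∧ A ≤ B ∧ ∀ f : H,
    Summable (fun j => ‖⟪f, u j⟫‖ ^ 2) ∧
    A * ‖f‖ ^ 2 ≤ (∑' j, ‖⟪f, u j⟫‖ ^ 2) ∧ (∑' j, ‖⟪f, u j⟫‖ ^ 2) ≤ B * ‖f‖ ^ 2

/-- `u` is a Riesz sequence in `H` with bounds `A ≤ B`. -/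
def IsRieszSeq (u : ℕ → H) (A B : ℝ) : Prop :=
  0 < A ∧ A ≤ B ∧ ∀ (s : Finset ℕ) (c : ℕ → ℂ),
    A * ∑ j ∈ s, ‖c j‖ ^ 2 ≤ ‖∑ j ∈ s, c j • u j‖ ^ 2 ∧
    ‖∑ j ∈ s, c j • u j‖ ^ 2 ≤ B * ∑ j ∈ s, ‖c j‖ ^ 2

/-- A Riesz basis of `H` with frame constants `A ≤ B` is simultaneously a frame and a
Riesz sequence with those bounds. -/
def IsRieszBasis (u : ℕ → H) (A B : ℝ) : Prop := IsFrame u A B ∧ IsRieszSeq u A B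

/-- Optimal frame constants of a Riesz basis: the largest `A` and the smallest `B`. -/
def OptimalRieszConstants (u : ℕ → H) (A B : ℝ) : Prop :=
  IsRieszBasis u A B ∧ ∀ A' B' : ℝ, IsRieszBasis u A' B' → A' ≤ A ∧ B ≤ B'

/-- Optimal frame bounds of a frame: the largest `A` and the smallest `B`. -/
def OptimalFrameBounds (u : ℕ → H) (A B : ℝ) : Prop :=
  IsFrame u A B ∧ ∀ A' B' : ℝ, IsFrame u A' B' → A' ≤ A ∧ B ≤ B'

/-- The sequence `B_N`: the first `N` vectors of `v` are replaced by those of `w`. -/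
def BNseq (w v : ℕ → H) (N : ℕ) : ℕ → H := fun j => if j < N then w j else v j

/-- The orthogonal projection `p'_N` onto `H'_N = span {v_0, …, v_{N-1}}`
(for an orthonormal family `v`). -/
def pproj (v : ℕ → H) (N : ℕ) (u : H) : H := ∑ j ∈ Finset.range N, ⟪v j, u⟫ • v j

/-- The sequence `B̃_N`: the projections `p'_N (w_j)` for `j < N`, followed by the `v_j`. -/
def BtNseq (w v : ℕ → H) (N : ℕ) : ℕ → H := fun j => if j < N then pproj v N (w j) else v j

/-- The `N × N` matrix `U'_N` with (paper-convention) entries `⟨p'_N w_i, p'_N w_j⟩`;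
here stated with Mathlib's inner product, conjugate-linear in the first slot. -/
def Umat' (v w : ℕ → H) (N : ℕ) : Matrix (Fin N) (Fin N) ℂ :=
  Matrix.of fun i j => ⟪pproj v N (w (j : ℕ)), pproj v N (w (i : ℕ))⟫

/-- The `N × N` matrix `U''_N` with (paper-convention) entries `⟨p''_N w_i, p''_N w_j⟩`,
where `p''_N u = u - p'_N u`. -/
def Umat'' (v w : ℕ → H) (N : ℕ) : Matrix (Fin N) (Fin N) ℂ :=
  Matrix.of fun i j =>
    ⟪w (j : ℕ) - pproj v N (w (j : ℕ)), w (i : ℕ) - pproj v N (w (i : ℕ))⟫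

/-- The quadratic form `⟨U c, c⟩ = ∑_{i,j} U_{i,j} c_i conj (c_j)` (real part). -/
def quadForm {N : ℕ} (U : Matrix (Fin N) (Fin N) ℂ) (c : Fin N → ℂ) : ℝ :=
  (∑ i, ∑ j, U i j * c i * conj (c j)).re

/-- The matrix `M_N` with (paper-convention) entries `⟨w_j, v_k⟩`. -/
def Mmat (v w : ℕ → H) (N : ℕ) : Matrix (Fin N) (Fin N) ℂ :=
  Matrix.of fun j k => ⟪v (k : ℕ), w (j : ℕ)⟫

/-- The quantity `∑_{j ≤ N} |⟨f, w_j⟩|² + ∑_{j > N} |⟨f, v_j⟩|²`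
(the squared norm of the analysis operator of `B_N` applied to `f`). -/
def frameFun (v w : ℕ → H) (N : ℕ) (f : H) : ℝ :=
  (∑ j ∈ Finset.range N, ‖⟪f, w j⟫‖ ^ 2) + ∑' j : {j : ℕ // N ≤ j}, ‖⟪f, v (j : ℕ)⟫‖ ^ 2

/-- The quantity `∑_{j ≤ N} |⟨f, p'_N w_j⟩|² + ∑_{j > N} |⟨f, v_j⟩|²`
(the squared norm of the analysis operator of `B̃_N` applied to `f`). -/
def frameFunT (v w : ℕ → H) (N : ℕ) (f : H) : ℝ :=
  (∑ j ∈ Finset.range N, ‖⟪f, pproj v N (w j)⟫‖ ^ 2) +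
    ∑' j : {j : ℕ // N ≤ j}, ‖⟪f, v (j : ℕ)⟫‖ ^ 2

private lemma split_sum (g : ℕ → ℝ) (hg : Summable g) (N : ℕ) :
    (∑ j ∈ Finset.range N, g j) + (∑' j : {j : ℕ // N ≤ j}, g j) = ∑' j, g j := by
  have h1 : (∑' j : {j : ℕ // N ≤ j}, g (j : ℕ))
      = ∑' j : ((↑(Finset.range N) : Set ℕ)ᶜ : Set ℕ), g (j : ℕ) :=
    (Equiv.subtypeEquivRight (p := fun j : ℕ => N ≤ j)
      (q := fun j : ℕ => j ∈ ((↑(Finset.range N) : Set ℕ)ᶜ))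
      (fun j => by simp)).tsum_eq (fun j => g (j : ℕ))
  rw [h1, ← Finset.tsum_subtype' (Finset.range N) g]
  exact Summable.tsum_add_tsum_compl (hg.subtype _) (hg.subtype _)

private lemma inner_pproj_eq (v : ℕ → H) (K : ℕ) (f x : H) :
    ⟪f, pproj v K x⟫ = ∑ j ∈ Finset.range K, ⟪v j, x⟫ * ⟪f, v j⟫ := by
  simp [pproj, inner_sum, inner_smul_right]

private lemma pproj_inner_vk (v : ℕ → H) (hv : Orthonormal ℂ v) (K : ℕ) (f : H) {k : ℕ}
    (hk : k < K) : ⟪pproj v K f, v k⟫ = ⟪f, v k⟫ := by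
  rw [pproj, hv.inner_left_sum _ (Finset.mem_range.2 hk), inner_conj_symm]

private lemma pproj_inner_top (v : ℕ → H) (hv : Orthonormal ℂ v) (N : ℕ) (f : H) :
    ⟪pproj v N f, v N⟫ = 0 := by
  rw [pproj, sum_inner]
  refine Finset.sum_eq_zero fun j hj => ?_
  rw [inner_smul_left, hv.2 (Finset.mem_range.1 hj).ne, mul_zero]

private lemma inner_pproj_pproj (v : ℕ → H) (hv : Orthonormal ℂ v) (K : ℕ) (f x : H) :
    ⟪f, pproj v K x⟫ = ⟪pproj v K f, pproj v K x⟫ := by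
  rw [inner_pproj_eq, inner_pproj_eq]
  refine Finset.sum_congr rfl fun k hk => ?_
  rw [pproj_inner_vk v hv K f (Finset.mem_range.1 hk)]

private lemma norm_pproj_sq (v : ℕ → H) (hv : Orthonormal ℂ v) (K : ℕ) (f : H) :
    ‖pproj v K f‖ ^ 2 = ∑ j ∈ Finset.range K, ‖⟪f, v j⟫‖ ^ 2 := by
  have h1 : (⟪pproj v K f, pproj v K f⟫ : ℂ)
      = ((∑ j ∈ Finset.range K, ‖⟪f, v j⟫‖ ^ 2 : ℝ) : ℂ) := by
    rw [← inner_pproj_pproj v hv, inner_pproj_eq]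
    push_cast
    refine Finset.sum_congr rfl fun j _ => ?_
    rw [show ⟪v j, f⟫ = conj ⟪f, v j⟫ from (inner_conj_symm _ _).symm,
      RCLike.conj_mul]
    norm_cast
  have h2 := inner_self_eq_norm_sq (𝕜 := ℂ) (pproj v K f)
  rw [← h2, h1]
  norm_cast

private lemma summable_g (v : ℕ → H) (hv : Orthonormal ℂ v) (f : H) :
    Summable (fun j => ‖⟪f, v j⟫‖ ^ 2) := by
  refine (hv.inner_products_summable f).congr fun j => ?_
  rw [norm_inner_symm]

private lemma tsum_g_le (v : ℕ → H) (hv : Orthonormal ℂ v) (f : H) (hf : ‖f‖ = 1) :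
    (∑' j, ‖⟪f, v j⟫‖ ^ 2) ≤ 1 := by
  calc (∑' j, ‖⟪f, v j⟫‖ ^ 2) = ∑' j, ‖⟪v j, f⟫‖ ^ 2 :=
        tsum_congr fun j => by rw [norm_inner_symm]
    _ ≤ ‖f‖ ^ 2 := hv.tsum_inner_products_le f
    _ = 1 := by rw [hf]; norm_num

private lemma frameFunT_basis (v w : ℕ → H) (hv : Orthonormal ℂ v) (N : ℕ) :
    frameFunT v w (N + 1) (v (N + 1)) = 1 := by
  have h1 : ∀ j ∈ Finset.range (N + 1), ‖⟪v (N + 1), pproj v (N + 1) (w j)⟫‖ ^ 2 = 0 := by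
    intro j _
    rw [inner_pproj_eq, Finset.sum_eq_zero, norm_zero]
    · ring
    · intro k hk
      rw [hv.2 (Finset.mem_range.1 hk).ne', mul_zero]
  have h2 : (∑' j : {j : ℕ // N + 1 ≤ j}, ‖⟪v (N + 1), v (j : ℕ)⟫‖ ^ 2) = 1 := by
    rw [tsum_eq_single (⟨N + 1, le_rfl⟩ : {j : ℕ // N + 1 ≤ j})]
    · rw [inner_self_eq_norm_sq_to_K, hv.1 (N + 1)]
      norm_num
    · intro b hb
      have hbne : (N + 1 : ℕ) ≠ (b : ℕ) := fun h => hb (Subtype.ext h.symm)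
      rw [hv.2 hbne, norm_zero]
      ring
  rw [frameFunT, Finset.sum_eq_zero h1, h2, zero_add]

private lemma frameFunT_le (v w : ℕ → H) (hv : Orthonormal ℂ v) (hw : ∀ j, ‖w j‖ = 1)
    (K : ℕ) (f : H) (hf : ‖f‖ = 1) : frameFunT v w K f ≤ K + 1 := by
  have hg : Summable (fun j => ‖⟪f, v j⟫‖ ^ 2) := summable_g v hv f
  have hsplit := split_sum _ hg K
  have htail : (∑' j : {j : ℕ // K ≤ j}, ‖⟪f, v (j : ℕ)⟫‖ ^ 2) ≤ 1 := by
    have hb := tsum_g_le v hv f hf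
    have hh : (0 : ℝ) ≤ ∑ j ∈ Finset.range K, ‖⟪f, v j⟫‖ ^ 2 :=
      Finset.sum_nonneg fun j _ => sq_nonneg _
    linarith
  have hhead : ∀ j ∈ Finset.range K, ‖⟪f, pproj v K (w j)⟫‖ ^ 2 ≤ 1 := by
    intro j _
    have h1 : ‖⟪f, pproj v K (w j)⟫‖ ≤ ‖pproj v K (w j)‖ := by
      calc ‖⟪f, pproj v K (w j)⟫‖ ≤ ‖f‖ * ‖pproj v K (w j)‖ := norm_inner_le_norm _ _
        _ = ‖pproj v K (w j)‖ := by rw [hf, one_mul]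
    have h2 : ‖pproj v K (w j)‖ ^ 2 ≤ 1 := by
      rw [norm_pproj_sq v hv]
      calc (∑ k ∈ Finset.range K, ‖⟪w j, v k⟫‖ ^ 2)
          = ∑ k ∈ Finset.range K, ‖⟪v k, w j⟫‖ ^ 2 :=
            Finset.sum_congr rfl fun k _ => by rw [norm_inner_symm]
        _ ≤ ‖w j‖ ^ 2 := hv.sum_inner_products_le _
        _ = 1 := by rw [hw j]; norm_num
    nlinarith [norm_nonneg (pproj v K (w j)), norm_nonneg (⟪f, pproj v K (w j)⟫ : ℂ)]
  calc frameFunT v w K f ≤ (∑ _j ∈ Finset.range K, (1 : ℝ)) + 1 :=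
        add_le_add (Finset.sum_le_sum hhead) htail
    _ = K + 1 := by simp

theorem statement11 (v w : ℕ → H) (hv : Orthonormal ℂ v)
    (hv_top : (span ℂ (Set.range v)).topologicalClosure = ⊤)
    (hw : ∀ j, ‖w j‖ = 1) :
    ∀ N : ℕ, sSup {x : ℝ | ∃ f : H, ‖f‖ = 1 ∧ x = frameFunT v w N f} ≤
      sSup {x : ℝ | ∃ f : H, ‖f‖ = 1 ∧ x = frameFunT v w (N + 1) f} := by
  intro N
  have hBdd : BddAbove {x : ℝ | ∃ f : H, ‖f‖ = 1 ∧ x = frameFunT v w (N + 1) f} := by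
    refine ⟨(N + 1 : ℕ) + 1, ?_⟩
    rintro x ⟨f, hf, rfl⟩
    exact frameFunT_le v w hv hw (N + 1) f hf
  have h1mem : (1 : ℝ) ∈ {x : ℝ | ∃ f : H, ‖f‖ = 1 ∧ x = frameFunT v w (N + 1) f} :=
    ⟨v (N + 1), hv.1 _, (frameFunT_basis v w hv N).symm⟩
  have h1le : (1 : ℝ) ≤ sSup {x : ℝ | ∃ f : H, ‖f‖ = 1 ∧ x = frameFunT v w (N + 1) f} :=
    le_csSup hBdd h1mem
  refine csSup_le ⟨frameFunT v w N (v N), v N, hv.1 N, rfl⟩ ?_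
  rintro x ⟨f, hf, rfl⟩
  have hg : Summable (fun j => ‖⟪f, v j⟫‖ ^ 2) := summable_g v hv f
  have hsplit := split_sum _ hg N
  set t : ℝ := ∑ j ∈ Finset.range N, ‖⟪f, v j⟫‖ ^ 2 with htdef
  have ht0 : (0 : ℝ) ≤ t := Finset.sum_nonneg fun j _ => sq_nonneg _
  have htotal := tsum_g_le v hv f hf
  have htail_nonneg : (0 : ℝ) ≤ ∑' j : {j : ℕ // N ≤ j}, ‖⟪f, v (j : ℕ)⟫‖ ^ 2 :=
    tsum_nonneg fun j => sq_nonneg _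
  have htail : (∑' j : {j : ℕ // N ≤ j}, ‖⟪f, v (j : ℕ)⟫‖ ^ 2) ≤ 1 - t := by linarith
  have ht1 : t ≤ 1 := by linarith
  have hPnorm : ‖pproj v N f‖ ^ 2 = t := norm_pproj_sq v hv N f
  have hhead : ∀ j : ℕ, ⟪f, pproj v N (w j)⟫ = ⟪pproj v N f, pproj v N (w j)⟫ :=
    fun j => inner_pproj_pproj v hv N f (w j)
  by_cases hP : pproj v N f = 0
  · have hx : frameFunT v w N f ≤ 1 := by
      have hz : ∀ j ∈ Finset.range N, ‖⟪f, pproj v N (w j)⟫‖ ^ 2 = 0 := by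
        intro j _
        rw [hhead j, hP, inner_zero_left, norm_zero]
        ring
      have htz : t = 0 := by rw [← hPnorm, hP, norm_zero]; ring
      rw [frameFunT, Finset.sum_eq_zero hz, zero_add]
      linarith
    exact hx.trans h1le
  · have hPpos : 0 < ‖pproj v N f‖ := norm_pos_iff.2 hP
    set a : ℝ := ‖pproj v N f‖⁻¹ with hadef
    have ha0 : 0 ≤ a := inv_nonneg.2 (norm_nonneg _)
    have haP : a * ‖pproj v N f‖ = 1 := inv_mul_cancel₀ hPpos.ne'
    set u : H := (a : ℂ) • pproj v N f with hudef
    have hu : ‖u‖ = 1 := by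
      rw [hudef, norm_smul, Complex.norm_real, Real.norm_eq_abs, abs_of_nonneg ha0, haP]
    have hterm : ∀ z : H, ‖⟪pproj v N f, z⟫‖ ^ 2 = t * ‖⟪u, z⟫‖ ^ 2 := by
      intro z
      rw [hudef, inner_smul_left, norm_mul]
      have hca : ‖(starRingEnd ℂ) (a : ℂ)‖ = a := by
        rw [RCLike.norm_conj, Complex.norm_real, Real.norm_eq_abs, abs_of_nonneg ha0]
      rw [hca, ← hPnorm, mul_pow]
      have : (‖pproj v N f‖ * a) ^ 2 = 1 := by rw [mul_comm, haP]; norm_num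
      nlinarith [sq_nonneg ‖⟪pproj v N f, z⟫‖]
    set Q : ℝ := ∑ j ∈ Finset.range N, ‖⟪u, pproj v N (w j)⟫‖ ^ 2 with hQdef
    have hQ0 : (0 : ℝ) ≤ Q := Finset.sum_nonneg fun _ _ => sq_nonneg _
    have hframe_head : (∑ j ∈ Finset.range N, ‖⟪f, pproj v N (w j)⟫‖ ^ 2) = t * Q := by
      rw [hQdef, Finset.mul_sum]
      exact Finset.sum_congr rfl fun j _ => by rw [hhead j, hterm]
    have huvN : ⟪u, v N⟫ = 0 := by
      rw [hudef, inner_smul_left, pproj_inner_top v hv, mul_zero]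
    have hsame : ∀ j : ℕ, ⟪u, pproj v (N + 1) (w j)⟫ = ⟪u, pproj v N (w j)⟫ := by
      intro j
      simp only [pproj, Finset.sum_range_succ, inner_add_right, inner_smul_right, huvN,
        mul_zero, add_zero]
    have hQle : Q ≤ frameFunT v w (N + 1) u := by
      rw [frameFunT]
      have hQeq : Q = ∑ j ∈ Finset.range N, ‖⟪u, pproj v (N + 1) (w j)⟫‖ ^ 2 :=
        Finset.sum_congr rfl fun j _ => by rw [hsame]
      have h1 : Q ≤ ∑ j ∈ Finset.range (N + 1), ‖⟪u, pproj v (N + 1) (w j)⟫‖ ^ 2 := by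
        rw [Finset.sum_range_succ, ← hQeq]
        nlinarith [sq_nonneg ‖⟪u, pproj v (N + 1) (w N)⟫‖]
      have h2 : (0 : ℝ) ≤ ∑' j : {j : ℕ // N + 1 ≤ j}, ‖⟪u, v (j : ℕ)⟫‖ ^ 2 :=
        tsum_nonneg fun _ => sq_nonneg _
      linarith
    have hule : frameFunT v w (N + 1) u ≤
        sSup {x : ℝ | ∃ f : H, ‖f‖ = 1 ∧ x = frameFunT v w (N + 1) f} :=
      le_csSup hBdd ⟨u, hu, rfl⟩
    rw [frameFunT, hframe_head]
    rcases le_total Q 1 with hQ1 | hQ1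
    · calc t * Q + (∑' j : {j : ℕ // N ≤ j}, ‖⟪f, v (j : ℕ)⟫‖ ^ 2)
          ≤ t * 1 + (1 - t) := add_le_add (by nlinarith) htail
        _ = 1 := by ring
        _ ≤ _ := h1le
    · calc t * Q + (∑' j : {j : ℕ // N ≤ j}, ‖⟪f, v (j : ℕ)⟫‖ ^ 2)
          ≤ t * Q + (1 - t) * Q := add_le_add le_rfl (by nlinarith)
        _ = Q := by ring
        _ ≤ frameFunT v w (N + 1) u := hQle
        _ ≤ _ := hule

end
end

section
/- Let H be an infinite-dimensional separable complex Hilbert space with orthonormal basis (v_j)_{j≥1}. Then there exists a sequence (w_j)_{j≥1} of unit vectors in H which is itself an orthonormal basis of H (so that (w_j) is a Riesz basis with optimal lower frame constant A_∞ = 1), but such that liminf_{n→∞} A_n = 0, where for each n ≥ 1, A_n = inf_{‖f‖=1} ( Σ_{j=1}^n |⟨f,w_j⟩|² + Σ_{j>n} |⟨f,v_j⟩|² ) is the optimal lower frame bound of B_n. In particular, the sequence (A_n)_{n≥1} is not monotone and the inequality A_∞ ≥ liminf_{n→∞} A_n can be strict. -/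
open scoped BigOperators ComplexConjugate
open Submodule Filter

noncomputable section

local notation "⟪" x ", " y "⟫" => @inner ℂ _ _ x y

variable {H : Type*} [NormedAddCommGroup H] [InnerProductSpace ℂ H] [CompleteSpace H]

/-!
Take `w` to be `v` with the consecutive pairs `(v₀, v₁), (v₂, v₃), …` swapped. This is again an
orthonormal basis, so its optimal Riesz constants are `1, 1`. For even `n`, `B_n` is a permutation
of `v` and `A_n = 1` by Parseval; for odd `n`, `B_n` misses `v_{n-1}` (its partner `v_n = w_{n-1}`
was cut off), so `A_n = 0`.
-/

section

variable {E : Type*} [NormedAddCommGroup E] [InnerProductSpace ℂ E]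

def pairSwap (n : ℕ) : ℕ := if n % 2 = 0 then n + 1 else n - 1

lemma pairSwap_involutive : Function.Involutive pairSwap := by
  intro n; unfold pairSwap; split_ifs <;> omega

lemma pairSwap_lt_of_even {n j : ℕ} (hn : n % 2 = 0) (hj : j < n) : pairSwap j < n := by
  unfold pairSwap; split_ifs <;> omega

lemma pairSwap_ne_pred_of_odd {n j : ℕ} (hn : n % 2 = 1) (hj : j < n) : pairSwap j ≠ n - 1 := by
  unfold pairSwap; split_ifs <;> omega

lemma Filter.liminf_eq_of_frequently_eq {α : Type*} {l : Filter α} {u : α → ℝ} {c : ℝ}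
    (hc : ∀ᶠ n in l, c ≤ u n) (hu : ∃ᶠ n in l, u n = c) : liminf u l = c :=
  le_antisymm
    (liminf_le_of_frequently_le (hu.mono fun _ h => h.le) (isBoundedUnder_of_eventually_ge hc))
    (le_liminf_of_le (IsCoboundedUnder.of_frequently_le (hu.mono fun _ h => h.le)) hc)

lemma Orthonormal.hasSum_norm_inner_sq [CompleteSpace E] {ι : Type*} {v : ι → E}
    (hv : Orthonormal ℂ v)
    (hv_top : (span ℂ (Set.range v)).topologicalClosure = ⊤) (f : E) :
    HasSum (fun j => ‖⟪f, v j⟫‖ ^ 2) (‖f‖ ^ 2) := by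
  let b : HilbertBasis ι ℂ E := HilbertBasis.mk hv hv_top.ge
  have h := lp.hasSum_norm (p := 2) (by norm_num) (b.repr f)
  simp only [ENNReal.toReal_ofNat, Real.rpow_two, LinearIsometryEquiv.norm_map,
    b.repr_apply_apply] at h
  simpa [b, norm_inner_symm] using h

lemma Orthonormal.norm_sum_smul_sq {ι : Type*} {w : ι → E} (hw : Orthonormal ℂ w)
    (s : Finset ι) (c : ι → ℂ) : ‖∑ j ∈ s, c j • w j‖ ^ 2 = ∑ j ∈ s, ‖c j‖ ^ 2 := by
  rw [← inner_self_eq_norm_sq (𝕜 := ℂ), hw.inner_sum c c s, map_sum]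
  refine Finset.sum_congr rfl fun i _ => ?_
  simp [RCLike.conj_mul, ← Complex.ofReal_pow]

lemma IsRieszSeq.bounds_le_one {u : ℕ → E} {A B : ℝ} (h : IsRieszSeq u A B) {j : ℕ}
    (hj : ‖u j‖ = 1) : A ≤ 1 ∧ 1 ≤ B := by
  simpa [hj] using h.2.2 {j} 1

lemma Orthonormal.isRieszBasis_one [CompleteSpace E] {w : ℕ → E} (hw : Orthonormal ℂ w)
    (hw_top : (span ℂ (Set.range w)).topologicalClosure = ⊤) : IsRieszBasis w 1 1 := by
  refine ⟨⟨one_pos, le_rfl, fun f => ?_⟩, ⟨one_pos, le_rfl, fun s c => ?_⟩⟩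
  · have hs := hw.hasSum_norm_inner_sq hw_top f
    simp [hs.summable, hs.tsum_eq]
  · simp [hw.norm_sum_smul_sq]

lemma Orthonormal.optimalRieszConstants_one [CompleteSpace E] {w : ℕ → E}
    (hw : Orthonormal ℂ w)
    (hw_top : (span ℂ (Set.range w)).topologicalClosure = ⊤) : OptimalRieszConstants w 1 1 :=
  ⟨hw.isRieszBasis_one hw_top, fun _ _ h => h.2.bounds_le_one (hw.1 0)⟩

section frameFun

variable {v w : ℕ → E} {n : ℕ}

lemma frameFun_nonneg (f : E) : 0 ≤ frameFun v w n f := by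
  unfold frameFun; positivity

lemma frameFun_self [CompleteSpace E] (hv : Orthonormal ℂ v)
    (hv_top : (span ℂ (Set.range v)).topologicalClosure = ⊤) (f : E) :
    frameFun v v n f = ‖f‖ ^ 2 := by
  have hs := hv.hasSum_norm_inner_sq hv_top f
  have htail : ∑' j : {j : ℕ // n ≤ j}, ‖⟪f, v j⟫‖ ^ 2
      = ∑' j : ↥(↑(Finset.range n) : Set ℕ)ᶜ, ‖⟪f, v j⟫‖ ^ 2 :=
    (Equiv.subtypeEquivRight (p := (n ≤ ·)) fun j => by simp).tsum_eq
      fun j : ↥(↑(Finset.range n) : Set ℕ)ᶜ => ‖⟪f, v j⟫‖ ^ 2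
  rw [frameFun, htail, hs.summable.sum_add_tsum_compl, hs.tsum_eq]

lemma frameFun_comp_eq_self {σ : ℕ → ℕ} (hσ : Function.Involutive σ)
    (hmaps : ∀ j < n, σ j < n) (f : E) : frameFun v (v ∘ σ) n f = frameFun v v n f := by
  unfold frameFun
  congr 1
  exact Finset.sum_nbij' σ σ (fun j hj => by simpa using hmaps j (by simpa using hj))
    (fun j hj => by simpa using hmaps j (by simpa using hj)) (fun j _ => hσ j) (fun j _ => hσ j)
    fun _ _ => rfl

lemma frameFun_eq_zero_of_orthogonal (hv : Orthonormal ℂ v) {m : ℕ} (hm : m < n)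
    (hw : ∀ j < n, ⟪v m, w j⟫ = 0) : frameFun v w n (v m) = 0 := by
  unfold frameFun
  have hhead : ∑ j ∈ Finset.range n, ‖⟪v m, w j⟫‖ ^ 2 = 0 :=
    Finset.sum_eq_zero fun j hj => by simp [hw j (Finset.mem_range.1 hj)]
  have htail : ∀ j : {j : ℕ // n ≤ j}, ‖⟪v m, v j⟫‖ ^ 2 = 0 := fun j => by
    simp [hv.inner_eq_zero (show m ≠ j by have := j.2; omega)]
  rw [hhead, tsum_congr htail, tsum_zero, add_zero]

lemma sInf_frameFun_eq_one (hv : Orthonormal ℂ v) (h : ∀ f, frameFun v w n f = ‖f‖ ^ 2) :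
    sInf {x : ℝ | ∃ f : E, ‖f‖ = 1 ∧ x = frameFun v w n f} = 1 := by
  refine IsLeast.csInf_eq ⟨⟨v 0, hv.1 0, by simp [h, hv.1 0]⟩, ?_⟩
  rintro x ⟨f, hf, rfl⟩
  simp [h, hf]

lemma sInf_frameFun_eq_zero {f : E} (hf : ‖f‖ = 1) (h : frameFun v w n f = 0) :
    sInf {x : ℝ | ∃ f : E, ‖f‖ = 1 ∧ x = frameFun v w n f} = 0 := by
  refine IsLeast.csInf_eq ⟨⟨f, hf, h.symm⟩, ?_⟩
  rintro x ⟨g, -, rfl⟩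
  exact frameFun_nonneg g

end frameFun

end

theorem statement17 (v : ℕ → H) (hv : Orthonormal ℂ v)
    (hv_top : (span ℂ (Set.range v)).topologicalClosure = ⊤) :
    ∃ w : ℕ → H, (∀ j, ‖w j‖ = 1) ∧ Orthonormal ℂ w ∧
      (span ℂ (Set.range w)).topologicalClosure = ⊤ ∧
      OptimalRieszConstants w 1 1 ∧
      liminf (fun n => sInf {x : ℝ | ∃ f : H, ‖f‖ = 1 ∧ x = frameFun v w n f}) atTop = 0 ∧
      ¬ Monotone (fun n => sInf {x : ℝ | ∃ f : H, ‖f‖ = 1 ∧ x = frameFun v w n f}) := by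
  set w := v ∘ pairSwap
  have hw : Orthonormal ℂ w := hv.comp _ pairSwap_involutive.injective
  have hw_top : (span ℂ (Set.range w)).topologicalClosure = ⊤ := by
    rwa [Set.range_comp, pairSwap_involutive.surjective.range_eq, Set.image_univ]
  let A : ℕ → ℝ := fun n => sInf {x : ℝ | ∃ f : H, ‖f‖ = 1 ∧ x = frameFun v w n f}
  have hA_even : ∀ n, n % 2 = 0 → A n = 1 := fun n hn =>
    sInf_frameFun_eq_one hv fun f =>
      (frameFun_comp_eq_self pairSwap_involutive (fun _ => pairSwap_lt_of_even hn) f).trans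
        (frameFun_self hv hv_top f)
  have hA_odd : ∀ n, n % 2 = 1 → A n = 0 := fun n hn =>
    sInf_frameFun_eq_zero (hv.1 (n - 1)) <|
      frameFun_eq_zero_of_orthogonal hv (by omega) fun j hj =>
        hv.inner_eq_zero (pairSwap_ne_pred_of_odd hn hj).symm
  have hA_nonneg : ∀ n, 0 ≤ A n := fun n =>
    Real.sInf_nonneg fun _ ⟨f, _, hx⟩ => hx ▸ frameFun_nonneg f
  refine ⟨w, hw.1, hw, hw_top, hw.optimalRieszConstants_one hw_top, ?_, fun hA_mono => ?_⟩
  · exact liminf_eq_of_frequently_eq (.of_forall hA_nonneg)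
      (frequently_atTop.2 fun N => ⟨2 * N + 1, by omega, hA_odd _ (by omega)⟩)
  · have h : A 0 ≤ A 1 := hA_mono zero_le_one
    rw [hA_even 0 rfl, hA_odd 1 rfl] at h
    norm_num at h
end
end
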